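/- arXiv:math/0611551 — 7 statements merged into one kernel-verified Lean document; each statement's English description precedes it below -/
import Mathlib

section
/- Let K be a field, M a p × q matrix over K, and suppose the columns of M are partitioned into n blocks. If every p × p submatrix of M whose p columns are chosen from p pairwise distinct blocks is non-invertible, then there exist an invertible p × p matrix Q and a positive integer m ≤ p such that in QM, the last m rows are identically zero on all but at most m − 1 of the column blocks. -/
/-!
By Rado's theorem in its deficiency form, if no transversal of column blocks is linearly
independent, some set `S` of blocks has columns spanning a subspace `W` with
`dim W + n < p + |S|`. With `m = p - dim W`, an invertible `Q` carrying `W` into the first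
`p - m` coordinates kills the last `m` rows of `QM` on the blocks of `S`, and only
`n - |S| < m` blocks remain.

Rado's theorem is proved by Rado–Welsh shrinking: if a block contains `x ≠ y`, deleting `x` or
deleting `y` preserves Rado's condition, since two violating sets `S₁, S₂` would, by
submodularity of rank, force a violation at `S₁ ∪ S₂` or at `(S₁ ∩ S₂) \ {k}`.
-/

open Module Submodule Finset Matrix

namespace Finset

variable {α β : Type*} [DecidableEq α] [DecidableEq β]

theorem biUnion_update_of_notMem {S : Finset α} {k : α} (hk : k ∉ S) (A : α → Finset β)
    (s : Finset β) :
    S.biUnion (Function.update A k s) = S.biUnion A :=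
  biUnion_congr rfl fun _ hi ↦ Function.update_of_ne (ne_of_mem_of_not_mem hi hk) _ _

variable {A : α → Finset β} {k : α} {x y : β}

theorem biUnion_union_subset_update_erase (hxy : x ≠ y) {S₁ S₂ : Finset α} (h₁ : k ∈ S₁)
    (h₂ : k ∈ S₂) :
    (S₁ ∪ S₂).biUnion A ⊆ S₁.biUnion (Function.update A k ((A k).erase x)) ∪
      S₂.biUnion (Function.update A k ((A k).erase y)) := by
  intro z hz
  simp only [mem_union, mem_biUnion] at hz ⊢
  obtain ⟨i, hi, hzi⟩ := hz
  by_cases hik : i = k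
  · subst hik
    by_cases hzx : z = x
    · exact .inr ⟨i, h₂, by simpa [hzx, hxy] using hzi⟩
    · exact .inl ⟨i, h₁, by simp [hzi, hzx]⟩
  · rcases hi with hi | hi
    · exact .inl ⟨i, hi, by simpa [hik] using hzi⟩
    · exact .inr ⟨i, hi, by simpa [hik] using hzi⟩

theorem biUnion_erase_inter_subset_update_erase (S₁ S₂ : Finset α) :
    ((S₁ ∩ S₂).erase k).biUnion A ⊆ S₁.biUnion (Function.update A k ((A k).erase x)) ∩
      S₂.biUnion (Function.update A k ((A k).erase y)) := by
  intro z hz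
  simp only [mem_inter, mem_biUnion, mem_erase] at hz ⊢
  obtain ⟨i, ⟨hik, hi₁, hi₂⟩, hzi⟩ := hz
  exact ⟨⟨i, hi₁, by simpa [hik] using hzi⟩, ⟨i, hi₂, by simpa [hik] using hzi⟩⟩

theorem update_erase_subset (A : α → Finset β) (k : α) (x : β) (i : α) :
    Function.update A k ((A k).erase x) i ⊆ A i := by
  rcases eq_or_ne i k with rfl | hik
  · simpa using erase_subset _ _
  · simp [hik]

theorem sum_card_update_erase_lt [Fintype α] (hx : x ∈ A k) :
    ∑ i, #(Function.update A k ((A k).erase x) i) < ∑ i, #(A i) :=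
  sum_lt_sum (fun i _ ↦ card_le_card (update_erase_subset A k x i))
    ⟨k, mem_univ k, by simpa using card_erase_lt_of_mem hx⟩

end Finset

section Rado

variable {K V ι : Type*} [DivisionRing K] [AddCommGroup V] [Module K V]

theorem exists_linearIndependent_fin_of_le_finrank_span {p : ℕ} (s : Finset V)
    (hp : p ≤ finrank K (span K (s : Set V))) :
    ∃ v : Fin p → V, (∀ k, v k ∈ s) ∧ LinearIndependent K v := by
  obtain ⟨t, hts, hspan, hind⟩ := exists_linearIndependent K (s : Set V)
  have : Fintype t := ((s.finite_toSet).subset hts).fintype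
  rw [← hspan, finrank_span_set_eq_card hind, Set.toFinset_card] at hp
  let e : Fin p ↪ t := (Fin.castLEEmb hp).trans (Fintype.equivFin t).symm.toEmbedding
  exact ⟨fun k ↦ e k, fun k ↦ hts (e k).2, hind.comp e e.injective⟩

variable (K)

/-- Rado's condition for an independent partial transversal of size `p`, i.e. of
deficiency `Fintype.card ι - p`. -/
def RadoCondition [DecidableEq V] [Fintype ι] (p : ℕ) (A : ι → Finset V) : Prop :=
  ∀ S : Finset ι, p + #S ≤ finrank K (span K (S.biUnion A : Set V)) + Fintype.card ι

def HasIndependentTransversal (p : ℕ) (A : ι → Finset V) : Prop :=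
  ∃ (g : Fin p → ι) (v : Fin p → V),
    Function.Injective g ∧ (∀ k, v k ∈ A (g k)) ∧ LinearIndependent K v

variable {K}

theorem HasIndependentTransversal.mono {p : ℕ} {A B : ι → Finset V} (hAB : ∀ i, A i ⊆ B i) :
    HasIndependentTransversal K p A → HasIndependentTransversal K p B
  | ⟨g, v, hg, hv, hind⟩ => ⟨g, v, hg, fun k ↦ hAB _ (hv k), hind⟩

theorem hasIndependentTransversal_of_card_le_one [DecidableEq V] [Fintype ι] {p : ℕ}
    {A : ι → Finset V} (hA : ∀ i, #(A i) ≤ 1)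
    (hp : p ≤ finrank K (span K (univ.biUnion A : Set V))) :
    HasIndependentTransversal K p A := by
  obtain ⟨v, hvA, hind⟩ := exists_linearIndependent_fin_of_le_finrank_span _ hp
  have hv : ∀ k, ∃ i, v k ∈ A i := fun k ↦ by simpa using hvA k
  choose g hg using hv
  refine ⟨g, v, fun k l hkl ↦ hind.injective ?_, hg, hind⟩
  exact card_le_one.mp (hA (g k)) _ (hg k) _ (hkl ▸ hg l)

variable [DecidableEq V] [Fintype ι] [DecidableEq ι] {p : ℕ} {A : ι → Finset V}

theorem RadoCondition.update_erase_or (hA : RadoCondition K p A) {k : ι} {x y : V}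
    (hxy : x ≠ y) :
    RadoCondition K p (Function.update A k ((A k).erase x)) ∨
      RadoCondition K p (Function.update A k ((A k).erase y)) := by
  set A₁ := Function.update A k ((A k).erase x)
  set A₂ := Function.update A k ((A k).erase y)
  by_contra h
  simp only [RadoCondition, not_or, not_forall, not_le] at h
  obtain ⟨⟨S₁, hS₁⟩, S₂, hS₂⟩ := h
  have mem_of_fails {B : ι → Finset V} {S : Finset ι} (s : Finset V)
      (hB : B = Function.update A k s)
      (hS : finrank K (span K (S.biUnion B : Set V)) + Fintype.card ι < p + #S) : k ∈ S := by
    by_contra hk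
    rw [hB, biUnion_update_of_notMem hk] at hS
    exact (hA S).not_gt hS
  have hk₁ := mem_of_fails _ rfl hS₁
  have hk₂ := mem_of_fails _ rfl hS₂
  set U := span K (S₁.biUnion A₁ : Set V)
  set W := span K (S₂.biUnion A₂ : Set V)
  have hsup : span K ((S₁ ∪ S₂).biUnion A : Set V) ≤ U ⊔ W := by
    rw [← span_union, ← coe_union]
    exact span_mono (biUnion_union_subset_update_erase hxy hk₁ hk₂)
  have hinf : span K (((S₁ ∩ S₂).erase k).biUnion A : Set V) ≤ U ⊓ W :=
    (span_mono (biUnion_erase_inter_subset_update_erase (x := x) (y := y) S₁ S₂)).trans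
      (le_inf (span_mono (coe_subset.mpr inter_subset_left))
        (span_mono (coe_subset.mpr inter_subset_right)))
  have hrank := finrank_sup_add_finrank_inf_eq U W
  have := finrank_mono hsup
  have := finrank_mono hinf
  have := hA (S₁ ∪ S₂)
  have := hA ((S₁ ∩ S₂).erase k)
  have := card_union_add_card_inter S₁ S₂
  have := card_erase_add_one (mem_inter.mpr ⟨hk₁, hk₂⟩)
  omega

theorem RadoCondition.hasIndependentTransversal (hA : RadoCondition K p A) :
    HasIndependentTransversal K p A := by
  induction hN : ∑ i, #(A i) using Nat.strong_induction_on generalizing A with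
  | _ N ih =>
  by_cases hsmall : ∀ i, #(A i) ≤ 1
  · refine hasIndependentTransversal_of_card_le_one hsmall ?_
    have := hA univ
    simp only [card_univ] at this
    omega
  push Not at hsmall
  obtain ⟨k, hk⟩ := hsmall
  obtain ⟨x, hx, y, hy, hxy⟩ := one_lt_card.mp hk
  rcases hA.update_erase_or (k := k) hxy with h | h
  · exact (ih _ (hN ▸ sum_card_update_erase_lt hx) h rfl).mono (update_erase_subset A k x)
  · exact (ih _ (hN ▸ sum_card_update_erase_lt hy) h rfl).mono (update_erase_subset A k y)

end Rado

theorem Submodule.exists_basis_repr_eq_zero_of_mem {K V : Type*} [DivisionRing K]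
    [AddCommGroup V] [Module K V] [FiniteDimensional K V] {n : ℕ} (hn : finrank K V = n)
    (W : Submodule K V) :
    ∃ b : Basis (Fin n) K V, ∀ w ∈ W, ∀ i : Fin n, finrank K W ≤ i → b.repr w i = 0 := by
  obtain ⟨C, hC⟩ := W.exists_isCompl
  have hrn : finrank K W + finrank K C = n := hn ▸ finrank_add_eq_of_isCompl hC
  let b₀ := ((finBasis K W).prod (finBasis K C)).map (prodEquivOfIsCompl W C hC)
  let σ := finSumFinEquiv.trans (finCongr hrn)
  refine ⟨b₀.reindex σ, fun w hw i hi ↦ ?_⟩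
  rw [Basis.repr_reindex_apply]
  rcases hσ : σ.symm i with j | j
  · rw [σ.symm_apply_eq] at hσ
    simp only [hσ, σ, Equiv.trans_apply, finSumFinEquiv_apply_left, finCongr_apply,
      Fin.val_cast, Fin.val_castAdd] at hi
    exact absurd j.isLt hi.not_gt
  · simp [b₀, (projectionOnto_apply_eq_zero_iff hC.symm).mpr hw]

theorem Submodule.exists_isUnit_mulVec_eq_zero_of_mem {K : Type*} [Field K] {p : ℕ}
    (W : Submodule K (Fin p → K)) :
    ∃ Q : Matrix (Fin p) (Fin p) K, IsUnit Q ∧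
      ∀ w ∈ W, ∀ i : Fin p, finrank K W ≤ i → (Q *ᵥ w) i = 0 := by
  obtain ⟨b, hb⟩ := W.exists_basis_repr_eq_zero_of_mem (finrank_fin_fun K)
  let := b.invertibleToMatrix (Pi.basisFun K (Fin p))
  refine ⟨b.toMatrix (Pi.basisFun K (Fin p)), isUnit_of_invertible _, fun w hw i hi ↦ ?_⟩
  have hrepr := (Pi.basisFun K (Fin p)).toMatrix_mulVec_repr b w
  rw [show ⇑((Pi.basisFun K (Fin p)).repr w) = w from funext (Pi.basisFun_repr K (Fin p) w)]
    at hrepr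
  rw [hrepr, hb w hw i hi]

def Matrix.colBlocks {m κ ι K : Type*} [Fintype κ] [DecidableEq ι] [DecidableEq (m → K)]
    (M : Matrix m κ K) (b : κ → ι) (i : ι) : Finset (m → K) :=
  ({j | b j = i} : Finset κ).image M.col

theorem Matrix.exists_isUnit_submatrix_of_radoCondition {K ι κ : Type*} [Field K] [Fintype ι]
    [DecidableEq ι] [Fintype κ] [DecidableEq K] {p : ℕ} {M : Matrix (Fin p) κ K} {b : κ → ι}
    (hM : RadoCondition K p (M.colBlocks b)) :
    ∃ f : Fin p → κ, Function.Injective (b ∘ f) ∧ IsUnit (M.submatrix id f) := by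
  obtain ⟨g, v, hg, hvM, hind⟩ := hM.hasIndependentTransversal
  have hv : ∀ k, ∃ j, b j = g k ∧ M.col j = v k := fun k ↦ by
    obtain ⟨j, hj, hjv⟩ := mem_image.mp (hvM k)
    exact ⟨j, by simpa using hj, hjv⟩
  choose f hfb hfv using hv
  have hcol : (M.submatrix id f).col = v := by
    ext k r
    simp [← hfv]
  exact ⟨f, by rwa [show b ∘ f = g from funext hfb],
    linearIndependent_cols_iff_isUnit.mp (hcol ▸ hind)⟩

/-- If no transversal p×p submatrix of the block-partitioned matrix M over a field
is invertible, then some invertible Q brings M to a form whose last m rows vanish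
on all but at most m-1 blocks. Blocks are given by b : Fin q → Fin n. -/
theorem stmt_0 {K : Type*} [Field K] {p q n : ℕ}
    (M : Matrix (Fin p) (Fin q) K) (b : Fin q → Fin n)
    (h : ∀ f : Fin p → Fin q, Function.Injective (b ∘ f) →
      ¬ IsUnit (M.submatrix id f)) :
    ∃ (Q : Matrix (Fin p) (Fin p) K) (m : ℕ), IsUnit Q ∧ 0 < m ∧ m ≤ p ∧
      ∃ S : Finset (Fin n), S.card ≤ m - 1 ∧
        ∀ i : Fin n, i ∉ S → ∀ j : Fin q, b j = i →
          ∀ r : Fin p, p - m ≤ (r : ℕ) → (Q * M) r j = 0 := by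
  classical
  obtain ⟨S, hS⟩ : ∃ S : Finset (Fin n),
      finrank K (span K (S.biUnion (M.colBlocks b) : Set (Fin p → K))) + n < p + #S := by
    by_contra! hM
    obtain ⟨f, hf, hunit⟩ := exists_isUnit_submatrix_of_radoCondition (b := b) (M := M)
      (by simpa [RadoCondition] using hM)
    exact h f hf hunit
  set W := span K (S.biUnion (M.colBlocks b) : Set (Fin p → K))
  obtain ⟨Q, hQ, hQW⟩ := W.exists_isUnit_mulVec_eq_zero_of_mem
  have hSn : #S ≤ n := by simpa using card_le_univ S
  refine ⟨Q, p - finrank K W, hQ, by omega, by omega, Sᶜ, ?_, ?_⟩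
  · rw [card_compl, Fintype.card_fin]
    omega
  · intro i hi j hj r hr
    have hcol : M.col j ∈ W := subset_span <| mem_coe.mpr <| mem_biUnion.mpr
      ⟨i, by simpa using hi, mem_image_of_mem _ (by simpa using hj)⟩
    exact hQW _ hcol r (by omega)
end

section
/- Let K be a field, M a p × q matrix over K with columns partitioned into n blocks. Suppose there exist an invertible p × p matrix Q and a positive integer m ≤ p such that in QM the last m rows are zero on all but at most m − 1 of the blocks. Then every p × p submatrix of M with columns from pairwise distinct blocks is non-invertible. -/
open Matrix


/-- Converse direction: if some invertible Q makes the last m rows of QM vanish on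
all but at most m-1 blocks, then every transversal p×p submatrix is non-invertible. -/
theorem stmt_1 {K : Type*} [Field K] {p q n : ℕ}
    (M : Matrix (Fin p) (Fin q) K) (b : Fin q → Fin n)
    (Q : Matrix (Fin p) (Fin p) K) (m : ℕ) (hQ : IsUnit Q) (hm : 0 < m) (hmp : m ≤ p)
    (S : Finset (Fin n)) (hS : S.card ≤ m - 1)
    (hz : ∀ i : Fin n, i ∉ S → ∀ j : Fin q, b j = i →
      ∀ r : Fin p, p - m ≤ (r : ℕ) → (Q * M) r j = 0) :
    ∀ f : Fin p → Fin q, Function.Injective (b ∘ f) →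
      ¬ IsUnit (M.submatrix id f) := by
  classical
  intro f hf hN
  set N := M.submatrix id f with hNdef
  set A := Q * M with hA
  -- the subtype of columns whose block lies in S
  set T := {j : Fin p // b (f j) ∈ S} with hT
  have hcardT : Fintype.card T ≤ m - 1 := by
    have h1 : Fintype.card T ≤ S.card := by
      rw [← Fintype.card_coe S]
      exact Fintype.card_le_of_injective (fun t => ⟨b (f t.1), t.2⟩)
        (fun t1 t2 h => Subtype.ext (hf (congrArg Subtype.val h)))
    omega
  set e : Fin m → Fin p := fun i => ⟨p - m + i, by omega⟩ with he
  have hein : Function.Injective e := by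
    intro i1 i2 h
    have := congrArg Fin.val h
    simp only [he] at this
    exact Fin.ext (by omega)
  set v : Fin m → T → K := fun i t => A (e i) (f t.1) with hv
  have hnli : ¬ LinearIndependent K v := by
    intro h
    have hc := h.fintype_card_le_finrank
    rw [Module.finrank_fintype_fun_eq_card] at hc
    simp only [Fintype.card_fin] at hc
    omega
  obtain ⟨g, hg0, i0, hi0⟩ := Fintype.not_linearIndependent_iff.mp hnli
  set w : Fin p → K := fun r =>
    if h : p - m ≤ (r : ℕ) then g ⟨(r : ℕ) - (p - m), by omega⟩ else 0 with hw
  have hwe : ∀ i : Fin m, w (e i) = g i := by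
    intro i
    simp only [hw, he]
    rw [dif_pos (by simp)]
    congr 1
    ext
    simp
  have hw0 : ∀ r : Fin p, (r : ℕ) < p - m → w r = 0 := by
    intro r hr
    simp only [hw]
    rw [dif_neg (by omega)]
  have hwne : w ≠ 0 := by
    intro h
    apply hi0
    have := congrFun h (e i0)
    rwa [hwe] at this
  -- reindexing lemma for sums
  have hesum : ∀ F : Fin p → K, (∀ r : Fin p, (r : ℕ) < p - m → F r = 0) →
      ∑ r, F r = ∑ i : Fin m, F (e i) := by
    intro F hF
    have him : ∑ i : Fin m, F (e i) = ∑ x ∈ Finset.univ.image e, F x :=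
      (Finset.sum_image (fun x _ y _ h => hein h)).symm
    rw [him]
    refine (Finset.sum_subset (Finset.subset_univ _) ?_).symm
    intro x _ hx
    apply hF
    by_contra hge
    push_neg at hge
    exact hx (Finset.mem_image.mpr ⟨⟨(x : ℕ) - (p - m), by omega⟩,
      Finset.mem_univ _, Fin.ext (by simp [he]; omega)⟩)
  have hmul : w ᵥ* (Q * N) = 0 := by
    funext j
    have hQN : ∀ r, (Q * N) r j = A r (f j) := by
      intro r
      simp [hNdef, hA, Matrix.mul_apply, Matrix.submatrix_apply]
    have : (w ᵥ* (Q * N)) j = ∑ r, w r * A r (f j) := by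
      simp only [Matrix.vecMul, dotProduct, hQN]
    rw [this, hesum _ (fun r hr => by rw [hw0 r hr, zero_mul])]
    simp only [hwe]
    by_cases hmem : b (f j) ∈ S
    · have := congrFun hg0 (⟨j, hmem⟩ : T)
      simpa [Finset.sum_apply, hv] using this
    · have hzero : ∀ i : Fin m, A (e i) (f j) = 0 := by
        intro i
        exact hz (b (f j)) hmem (f j) rfl (e i) (by simp [he])
      simp [hzero]
  have hQNu : IsUnit (Q * N) := hQ.mul hN
  have hd : IsUnit (Q * N).det := (Matrix.isUnit_iff_isUnit_det _).mp hQNu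
  have hinv : (Q * N) * (Q * N)⁻¹ = 1 := Matrix.mul_nonsing_inv _ hd
  apply hwne
  calc w = w ᵥ* 1 := (Matrix.vecMul_one w).symm
    _ = w ᵥ* ((Q * N) * (Q * N)⁻¹) := by rw [hinv]
    _ = (w ᵥ* (Q * N)) ᵥ* (Q * N)⁻¹ := by rw [Matrix.vecMul_vecMul]
    _ = 0 := by rw [hmul]; exact Matrix.zero_vecMul _
end

section
/- Let K be a field and M an A × B matrix over K, with Π a partition of B into n classes, and k a positive integer. If there exists a partial transversal P of Π with |P| = k such that M[A, P] has rank k, then for every subset Θ of Π, the rank of M[A, ⋃Θ] is at least k + |Θ| − n. -/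
/-!
Split `P` into the columns whose class lies in `Θ` and the rest. The former are columns of
`M[A, ⋃Θ]`, so they span a space of dimension at most its rank; the latter meet each class
outside `Θ` at most once, so there are at most `n - |Θ|` of them. Since the columns of `P`
span a space of dimension `k`, subadditivity of dimension gives `k ≤ rank M[A, ⋃Θ] + n - |Θ|`.
-/

open Submodule Module Finset

theorem Finset.card_filter_apply_notMem_le_card_compl {ι α : Type*} [Fintype α] [DecidableEq α]
    {f : ι → α} {s : Finset ι} (hf : Set.InjOn f s) (t : Finset α) :
    #{i ∈ s | f i ∉ t} ≤ #tᶜ :=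
  card_le_card_of_injOn f (fun _ hi => mem_compl.2 (mem_filter.1 hi).2)
    (hf.mono (filter_subset _ _))

theorem finrank_span_image_le_card {K V ι : Type*} [DivisionRing K] [AddCommGroup V]
    [Module K V] [DecidableEq V] (v : ι → V) (s : Finset ι) :
    finrank K (span K (v '' s)) ≤ #s := by
  rw [← coe_image]
  exact (finrank_span_finset_le_card _).trans card_image_le

theorem finrank_span_image_le_filter_add_card {K V ι : Type*} [DivisionRing K] [AddCommGroup V]
    [Module K V] (v : ι → V) (s : Finset ι) (p : ι → Prop) [DecidablePred p] :
    finrank K (span K (v '' s)) ≤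
      finrank K (span K (v '' ↑{i ∈ s | p i})) + #{i ∈ s | ¬p i} := by
  classical
  have hsplit :
      span K (v '' s) = span K (v '' ↑{i ∈ s | p i}) ⊔ span K (v '' ↑{i ∈ s | ¬p i}) := by
    rw [← span_union, ← Set.image_union, ← coe_union, filter_union_filter_not_eq]
  have (t : Finset ι) : FiniteDimensional K (span K (v '' t)) :=
    FiniteDimensional.span_of_finite K (t.finite_toSet.image v)
  rw [hsplit]
  exact (finrank_add_le_finrank_add_finrank _ _).trans
    (Nat.add_le_add_left (finrank_span_image_le_card v _) _)

theorem Matrix.rank_submatrix_subtype_eq_finrank_span {R A B : Type*} [CommSemiring R]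
    (M : Matrix A B R) (p : B → Prop) [Fintype {j // p j}] :
    (M.submatrix id ((↑) : {j // p j} → B)).rank = finrank R (span R (M.col '' {j | p j})) := by
  rw [rank_eq_finrank_span_cols, ← Subtype.range_coe_subtype, ← Set.range_comp]
  rfl

theorem stmt_6_general {K : Type*} [Field K] {A B : Type*} [Fintype B]
    {n k : ℕ} (M : Matrix A B K) (b : B → Fin n)
    (P : Finset B) (htrans : Set.InjOn b ↑P)
    (hrank : (M.submatrix id (fun j : {j : B // j ∈ P} => (j : B))).rank = k) :
    ∀ Θ : Finset (Fin n),
      (k : ℤ) + Θ.card - n ≤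
        ((M.submatrix id (fun j : {j : B // b j ∈ Θ} => (j : B))).rank : ℤ) := by
  intro Θ
  have hP : finrank K (span K (M.col '' P)) = k := by
    rw [← hrank, M.rank_submatrix_subtype_eq_finrank_span, setOfPred_mem]
  have hinside : finrank K (span K (M.col '' ↑{j ∈ P | b j ∈ Θ})) ≤
      (M.submatrix id (fun j : {j : B // b j ∈ Θ} => (j : B))).rank := by
    rw [M.rank_submatrix_subtype_eq_finrank_span]
    have : FiniteDimensional K (span K (M.col '' {j | b j ∈ Θ})) :=
      FiniteDimensional.span_of_finite K ((Set.toFinite _).image _)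
    exact finrank_mono (span_mono (Set.image_mono fun j hj => (mem_filter.1 hj).2))
  have houtside : #{j ∈ P | b j ∉ Θ} ≤ n - #Θ := by
    simpa only [card_compl, Fintype.card_fin] using card_filter_apply_notMem_le_card_compl htrans Θ
  have hΘ : #Θ ≤ n := card_le_univ Θ |>.trans_eq (Fintype.card_fin n)
  have hsplit := finrank_span_image_le_filter_add_card (K := K) M.col P (b · ∈ Θ)
  omega

/-- Rado–Perfect ("only if" direction): if a partial transversal P of size k has
column-submatrix of rank k, then for every set Θ of classes the rank of the
columns in ⋃Θ is at least k + |Θ| - n. -/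
theorem stmt_6 {K : Type*} [Field K] {A B : Type*} [Fintype A] [Fintype B]
    [DecidableEq B] {n k : ℕ} (M : Matrix A B K) (b : B → Fin n)
    (P : Finset B) (hcard : P.card = k) (htrans : Set.InjOn b ↑P)
    (hrank : (M.submatrix id (fun j : {j : B // j ∈ P} => (j : B))).rank = k) :
    ∀ Θ : Finset (Fin n),
      (k : ℤ) + Θ.card - n ≤
        ((M.submatrix id (fun j : {j : B // b j ∈ Θ} => (j : B))).rank : ℤ) :=
  stmt_6_general M b P htrans hrank
end

section
/- Let K be a field, M a p × q matrix over K with columns partitioned into n blocks, and suppose P is a set of p column indices such that M restricted to columns P is invertible, with Q its inverse. Suppose r is a row index and c, c' are column indices with c' ∈ P, (QM)[r, c'] = 1, and (QM)[r, c] ≠ 0. Then the set P' = (P ∪ {c}) \ {c'} also indexes an invertible p × p submatrix of M. -/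
/-- Exchange step: if M[·,P] (columns given by the injection f) is invertible with
inverse Q, (QM)[r, f k] = 1 and (QM)[r, c] ≠ 0, then replacing the column f k of P
by c again gives an invertible p×p submatrix. -/
theorem stmt_11 {K : Type*} [Field K] {p q : ℕ}
    (M : Matrix (Fin p) (Fin q) K) (f : Fin p → Fin q) (hf : Function.Injective f)
    (hinv : IsUnit (M.submatrix id f))
    (Q : Matrix (Fin p) (Fin p) K) (hQ : Q * M.submatrix id f = 1)
    (r k : Fin p) (c : Fin q)
    (h1 : (Q * M) r (f k) = 1) (h2 : (Q * M) r c ≠ 0) :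
    IsUnit (M.submatrix id (Function.update f k c)) := by
  -- (QM) restricted to the columns f is the identity
  have key : ∀ i j, (Q * M) i (f j) = (1 : Matrix (Fin p) (Fin p) K) i j := by
    intro i j
    rw [← hQ]
    simp [Matrix.mul_apply]
  -- hence r = k
  have hrk : r = k := by
    by_contra h
    rw [key r k, Matrix.one_apply_ne h] at h1
    exact one_ne_zero h1.symm
  subst hrk
  -- Q is invertible (it has a right inverse M.submatrix id f, squares)
  have hQdet : Q.det ≠ 0 := by
    have : Q.det * (M.submatrix id f).det = 1 := by
      rw [← Matrix.det_mul, hQ, Matrix.det_one]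
    intro h0
    rw [h0, zero_mul] at this
    exact zero_ne_one this
  -- N = (QM) restricted to the new columns equals identity with column r replaced
  set N : Matrix (Fin p) (Fin p) K := (Q * M).submatrix id (Function.update f r c) with hN
  have hNeq : N = (1 : Matrix (Fin p) (Fin p) K).updateCol r (fun i => (Q * M) i c) := by
    ext i j
    by_cases hjk : j = r
    · subst hjk
      simp [hN, Matrix.updateCol_apply]
    · simp [hN, Matrix.updateCol_apply, hjk, Function.update_of_ne hjk, key]
  have hNdet : N.det ≠ 0 := by
    rw [hNeq, ← Matrix.cramer_apply, Matrix.cramer_one]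
    simpa using h2
  -- N = Q * (M restricted to new columns)
  have hNmul : N = Q * M.submatrix id (Function.update f r c) := by
    ext i j
    simp [hN, Matrix.mul_apply]
  have : (M.submatrix id (Function.update f r c)).det ≠ 0 := by
    intro h0
    rw [hNmul, Matrix.det_mul, h0, mul_zero] at hNdet
    exact hNdet rfl
  rw [Matrix.isUnit_iff_isUnit_det]
  exact isUnit_iff_ne_zero.mpr this
end

section
/- Let K be a field and M a p × q matrix over K of rank ρ. Then the maximum possible number of distinct standard unit vectors appearing as columns of QM, over all invertible p × p matrices Q, equals ρ. Consequently, M is in reduced echelon form (in the sense of maximizing this count) if and only if ρ distinct standard unit vectors occur among its columns. -/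
/-!
Columns of `N` that are distinct standard unit vectors are linearly independent vectors of the
column space, so there are at most `rank N` of them, and `rank (Q * M) = rank M` for invertible
`Q`. Conversely, pick `rank M` linearly independent columns of `M`, extend them to a basis and
let `Q` send this basis to the standard basis: those columns of `Q * M` are then distinct
standard unit vectors.
-/

namespace Matrix

variable {R m n : Type*} [Fintype m] [DecidableEq m] [Fintype n]

section unitColumns

variable [Zero R] [One R] [DecidableEq R]

def unitColumnIndices (N : Matrix m n R) : Finset m :=
  Finset.univ.filter fun i ↦ ∃ j, ∀ r, N r j = if r = i then 1 else 0

theorem mem_unitColumnIndices {N : Matrix m n R} {i : m} :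
    i ∈ N.unitColumnIndices ↔ ∃ j, N.col j = Pi.single i 1 := by
  simp only [unitColumnIndices, Finset.mem_filter, Finset.mem_univ, true_and]
  exact exists_congr fun j ↦ by simp only [funext_iff, col_apply, Pi.single_apply]

end unitColumns

section CommRing

variable [CommRing R] [StrongRankCondition R] [DecidableEq R]

theorem card_unitColumnIndices_le_rank (N : Matrix m n R) :
    N.unitColumnIndices.card ≤ N.rank := by
  have := nontrivial_of_invariantBasisNumber R
  have := Module.Finite.span_of_finite R (Set.finite_range N.col)
  let S := N.unitColumnIndices
  let v : S → m → R := Pi.basisFun R m ∘ (↑)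
  have hli : LinearIndependent R v :=
    (Pi.basisFun R m).linearIndependent.comp _ Subtype.val_injective
  have hle : Submodule.span R (Set.range v) ≤ Submodule.span R (Set.range N.col) := by
    refine Submodule.span_mono ?_
    rintro _ ⟨i, rfl⟩
    obtain ⟨j, hj⟩ := mem_unitColumnIndices.1 i.2
    exact ⟨j, hj.trans (Pi.basisFun_apply R m i).symm⟩
  calc S.card = Fintype.card S := (Fintype.card_coe S).symm
    _ = Module.finrank R (Submodule.span R (Set.range v)) := (finrank_span_eq_card hli).symm
    _ ≤ Module.finrank R (Submodule.span R (Set.range N.col)) := Submodule.finrank_mono hle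
    _ = N.rank := (rank_eq_finrank_span_cols N).symm

theorem card_unitColumnIndices_mul_le_rank {Q : Matrix m m R} (hQ : IsUnit Q)
    (M : Matrix m n R) : (Q * M).unitColumnIndices.card ≤ M.rank :=
  (card_unitColumnIndices_le_rank (Q * M)).trans_eq
    (rank_mul_eq_right_of_isUnit_det Q M ((isUnit_iff_isUnit_det Q).1 hQ))

end CommRing

section Field

variable {K : Type*} [Field K]

theorem exists_isUnit_mulVec_eq_single {s : Set (m → K)} (hs : LinearIndepOn K id s) :
    ∃ (Q : Matrix m m K) (f : s → m), IsUnit Q ∧ Function.Injective f ∧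
      ∀ x : s, Q *ᵥ x = Pi.single (f x) 1 := by
  let B := Module.Basis.extend hs
  let e := B.indexEquiv (Pi.basisFun K m)
  let Q := B.equiv (Pi.basisFun K m) e
  refine ⟨LinearMap.toMatrix' Q.toLinearMap, fun x ↦ e ⟨x, hs.subset_extend _ x.2⟩,
    LinearMap.isUnit_toMatrix'_iff.2 ((Module.End.isUnit_iff _).2 Q.bijective),
    fun x y hxy ↦ Subtype.ext (congrArg Subtype.val (e.injective hxy) :), fun x ↦ ?_⟩
  rw [LinearMap.toMatrix'_mulVec]
  calc Q x = Q (B ⟨x, hs.subset_extend _ x.2⟩) := by rw [Module.Basis.extend_apply_self]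
    _ = Pi.single _ 1 := by rw [Module.Basis.equiv_apply, Pi.basisFun_apply]

theorem exists_isUnit_rank_le_card_unitColumnIndices_mul [DecidableEq K] (M : Matrix m n K) :
    ∃ Q : Matrix m m K, IsUnit Q ∧ M.rank ≤ (Q * M).unitColumnIndices.card := by
  obtain ⟨t, hts, hspan, hli⟩ := exists_linearIndependent K (Set.range M.col)
  obtain ⟨Q, f, hQ, hf, hQf⟩ := exists_isUnit_mulVec_eq_single hli
  have : Fintype t := ((Set.finite_range _).subset hts).fintype
  let S := (Q * M).unitColumnIndices
  have hfS (x : t) : f x ∈ S := by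
    obtain ⟨j, hj⟩ := hts x.2
    have hcol : (Q * M).col j = Q *ᵥ M.col j := rfl
    exact mem_unitColumnIndices.2 ⟨j, hcol.trans (hj ▸ hQf x)⟩
  refine ⟨Q, hQ, ?_⟩
  calc M.rank = t.toFinset.card := by
        rw [rank_eq_finrank_span_cols, ← hspan, finrank_span_set_eq_card hli]
    _ = Fintype.card t := Set.toFinset_card t
    _ ≤ Fintype.card S := Fintype.card_le_of_injective (fun x ↦ ⟨f x, hfS x⟩)
        fun x y h ↦ hf (congrArg Subtype.val h)
    _ = S.card := Fintype.card_coe S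

end Field

end Matrix

open Matrix

/-- Over a field, the maximum number of distinct standard unit vectors among the columns
of QM over all invertible Q equals rank M; and M is in reduced echelon form (attains
this maximum itself) iff rank M distinct standard unit vectors occur among its columns. -/
theorem stmt_13 {K : Type*} [Field K] [DecidableEq K] {p q : ℕ}
    (M : Matrix (Fin p) (Fin q) K) :
    let count : Matrix (Fin p) (Fin q) K → ℕ := fun N =>
      (Finset.univ.filter (fun i : Fin p =>
        ∃ j : Fin q, ∀ r : Fin p, N r j = if r = i then 1 else 0)).card
    IsGreatest { t : ℕ | ∃ Q : Matrix (Fin p) (Fin p) K, IsUnit Q ∧ count (Q * M) = t }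
      M.rank ∧
    ((∀ Q : Matrix (Fin p) (Fin p) K, IsUnit Q → count (Q * M) ≤ count M) ↔
      count M = M.rank) := by
  intro count
  have hcount (N : Matrix (Fin p) (Fin q) K) : count N = N.unitColumnIndices.card := by
    simp only [count, unitColumnIndices]
    congr
  have hbound (Q : Matrix (Fin p) (Fin p) K) (hQ : IsUnit Q) : count (Q * M) ≤ M.rank :=
    hcount _ ▸ card_unitColumnIndices_mul_le_rank hQ M
  obtain ⟨Q₀, hQ₀, hQ₀M⟩ := exists_isUnit_rank_le_card_unitColumnIndices_mul M
  have hattain : count (Q₀ * M) = M.rank := le_antisymm (hbound Q₀ hQ₀) (hcount _ ▸ hQ₀M)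
  refine ⟨⟨⟨Q₀, hQ₀, hattain⟩, ?_⟩, fun h ↦ ?_, fun h Q hQ ↦ ?_⟩
  · rintro _ ⟨Q, hQ, rfl⟩
    exact hbound Q hQ
  · exact le_antisymm (hcount M ▸ card_unitColumnIndices_le_rank M) (hattain ▸ h Q₀ hQ₀)
  · exact h ▸ hbound Q hQ
end

section
/- Let R be a ring with identity, M a p × q matrix over R, and suppose the maximum number t of distinct standard unit vectors appearing as columns of QM over all invertible Q satisfies t < p. Then for any invertible Q achieving this maximum, QM has at least p − t rows containing no unit entries of R. -/
/-- Elementary matrix: identity plus a column `c` placed in column `r₀`. -/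
def elemMat {R : Type*} [Ring R] {n : Type*} [Fintype n] [DecidableEq n]
    (c : n → R) (r₀ : n) : Matrix n n R :=
  fun r s => (if r = s then 1 else 0) + (if s = r₀ then c r else 0)

lemma elemMat_mul {R : Type*} [Ring R] {n m : Type*} [Fintype n] [DecidableEq n]
    (c : n → R) (r₀ : n) (X : Matrix n m R) (r : n) (j : m) :
    (elemMat c r₀ * X) r j = X r j + c r * X r₀ j := by
  simp [elemMat, Matrix.mul_apply, add_mul, Finset.sum_add_distrib, ite_mul]

/-- If the maximal number t of distinct standard unit vectors among columns of QM over
invertible Q satisfies t < p, then any invertible Q attaining t yields a matrix QM with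
at least p - t rows containing no unit entries. -/
theorem stmt_15 {R : Type*} [Ring R] [DecidableEq R] {p q : ℕ}
    (M : Matrix (Fin p) (Fin q) R) (t : ℕ)
    (ht : IsGreatest { s : ℕ | ∃ Q : Matrix (Fin p) (Fin p) R, IsUnit Q ∧
      (Finset.univ.filter (fun i : Fin p =>
        ∃ j : Fin q, ∀ r : Fin p, (Q * M) r j = if r = i then 1 else 0)).card = s } t)
    (htp : t < p)
    (Q : Matrix (Fin p) (Fin p) R) (hQ : IsUnit Q)
    (hc : (Finset.univ.filter (fun i : Fin p =>
      ∃ j : Fin q, ∀ r : Fin p, (Q * M) r j = if r = i then 1 else 0)).card = t) :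
    p - t ≤ Set.ncard {r : Fin p | ∀ j : Fin q, ¬ IsUnit ((Q * M) r j)} := by
  classical
  set S : Finset (Fin p) := Finset.univ.filter (fun i : Fin p =>
      ∃ j : Fin q, ∀ r : Fin p, (Q * M) r j = if r = i then 1 else 0) with hS
  -- Key claim: rows not in S have no unit entries.
  have key : ∀ r₀ : Fin p, r₀ ∉ S → ∀ j₀ : Fin q, ¬ IsUnit ((Q * M) r₀ j₀) := by
    intro r₀ hr₀ j₀ hu
    obtain ⟨u, hu⟩ := hu
    set a : Fin p → R := fun r => (Q * M) r j₀ with ha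
    set c : Fin p → R := fun r => if r = r₀ then ((↑u⁻¹ : R) - 1) else -(a r * ↑u⁻¹) with hcdef
    set d : Fin p → R := fun r => if r = r₀ then ((↑u : R) - 1) else a r with hddef
    set E := elemMat c r₀ with hE
    set F := elemMat d r₀ with hF
    have hEF : E * F = 1 := by
      ext r s
      rw [hE, elemMat_mul]
      simp only [hF, elemMat, hcdef, hddef, Matrix.one_apply]
      by_cases hs : s = r₀ <;> by_cases hr : r = r₀
      · simp [hs, hr, mul_add, mul_sub, sub_mul, mul_one, one_mul, Units.inv_mul,
          Units.mul_inv]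
      · simp [hs, hr, mul_add, mul_sub, sub_mul, neg_mul, mul_assoc, Units.inv_mul,
          Units.mul_inv]
      · have hs' : ¬ r₀ = s := fun h => hs h.symm
        simp [hs, hs', hr]
      · have hs' : ¬ r₀ = s := fun h => hs h.symm
        simp [hs, hs', hr]
    have hFE : F * E = 1 := by
      ext r s
      rw [hF, elemMat_mul]
      simp only [hE, elemMat, hcdef, hddef, Matrix.one_apply]
      by_cases hs : s = r₀ <;> by_cases hr : r = r₀
      · simp [hs, hr, mul_add, mul_sub, sub_mul, mul_one, one_mul, Units.inv_mul,
          Units.mul_inv]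
      · simp [hs, hr, mul_add, mul_sub, sub_mul, neg_mul, mul_assoc, Units.inv_mul,
          Units.mul_inv]
      · have hs' : ¬ r₀ = s := fun h => hs h.symm
        simp [hs, hs', hr]
      · have hs' : ¬ r₀ = s := fun h => hs h.symm
        simp [hs, hs', hr]
    have hEunit : IsUnit E := ⟨⟨E, F, hEF, hFE⟩, rfl⟩
    have hQ' : IsUnit (E * Q) := hEunit.mul hQ
    set S' : Finset (Fin p) := Finset.univ.filter (fun i : Fin p =>
        ∃ j : Fin q, ∀ r : Fin p, (E * Q * M) r j = if r = i then 1 else 0) with hS'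
    have hmem₀ : r₀ ∈ S' := by
      rw [hS', Finset.mem_filter]
      refine ⟨Finset.mem_univ _, j₀, fun r => ?_⟩
      rw [Matrix.mul_assoc, hE, elemMat_mul]
      by_cases hr : r = r₀
      · simp only [hr, hcdef, if_pos rfl]
        rw [show (Q * M) r₀ j₀ = (↑u : R) from hu.symm]
        rw [sub_mul, one_mul, Units.inv_mul, if_pos trivial]
        abel
      · simp only [hcdef, if_neg hr]
        rw [show (Q * M) r₀ j₀ = (↑u : R) from hu.symm, ha]
        simp only [neg_mul, mul_assoc, Units.inv_mul, mul_one]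
        simp [hr]
    have hsub : insert r₀ S ⊆ S' := by
      intro i hi
      rcases Finset.mem_insert.mp hi with rfl | hiS
      · exact hmem₀
      · rw [hS, Finset.mem_filter] at hiS
        obtain ⟨-, j, hj⟩ := hiS
        rw [hS', Finset.mem_filter]
        refine ⟨Finset.mem_univ _, j, fun r => ?_⟩
        have hne : r₀ ≠ i := by
          rintro rfl
          exact hr₀ (by rw [hS, Finset.mem_filter]; exact ⟨Finset.mem_univ _, j, hj⟩)
        rw [Matrix.mul_assoc, hE, elemMat_mul, hj r, hj r₀, if_neg hne, mul_zero, add_zero]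
    have hcard : t + 1 ≤ S'.card := by
      have : (insert r₀ S).card = t + 1 := by
        rw [Finset.card_insert_of_notMem hr₀, hc]
      rw [← this]
      exact Finset.card_le_card hsub
    have hle : S'.card ≤ t := ht.2 ⟨E * Q, hQ', rfl⟩
    omega
  -- Now conclude.
  have hsub2 : (↑(Sᶜ) : Set (Fin p)) ⊆ {r : Fin p | ∀ j : Fin q, ¬ IsUnit ((Q * M) r j)} := by
    intro r hr
    simp only [Finset.coe_compl, Set.mem_compl_iff, Finset.mem_coe] at hr
    exact key r hr
  have h1 : (↑(Sᶜ) : Set (Fin p)).ncard = p - t := by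
    rw [Set.ncard_coe_finset, Finset.card_compl, hc]
    simp
  calc p - t = (↑(Sᶜ) : Set (Fin p)).ncard := h1.symm
    _ ≤ _ := Set.ncard_le_ncard hsub2 (Set.toFinite _)
end

section
/- Let R be a ring with identity, possibly non-commutative, and M a p × q matrix over R whose columns are partitioned into n blocks. If no p × p submatrix of M with columns from pairwise distinct blocks is invertible, then there exist an invertible p × p matrix Q over R and a positive integer m ≤ p such that in all but at most m − 1 of the blocks of QM, every column has its last m entries either all zero or containing at least one non-zero non-unit. -/
/-!
Fix row operations `Q` and a maximal family of pivots: columns from pairwise distinct blocks that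
`Q * M` turns into distinct unit vectors. There are fewer than `p` of them, for `p` pivots would
form an invertible transversal submatrix. Call a column pivotable on a set of rows if its entries
there are zeros and units, not all zero. Starting from the non-pivot rows, keep adding the pivot
row of every pivot whose block contains a column pivotable on the rows collected so far. Once
this stabilises, no column outside the blocks of the collected pivots is pivotable: in a block
carrying a pivot it would have been collected, and a column in a block without pivot is ruled
out by an exchange argument (pivot on its first unit, which sits in the row of a pivot it then
replaces) that pushes it down the tower until its unit lies in a non-pivot row, where it would
extend the maximal family. Moving the collected rows to the bottom gives `Q`, and `m` is their
number: the non-pivot rows, at least one, plus one row per collected pivot.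
-/

section

open Matrix Function

theorem Function.Injective.update {α γ : Type*} [DecidableEq α] {f : α → γ}
    (hf : Injective f) {a : α} {v : γ} (hv : ∀ x, x ≠ a → f x ≠ v) :
    Injective (update f a v) := by
  intro x y hxy
  by_cases hx : x = a <;> by_cases hy : y = a
  · rw [hx, hy]
  · subst hx
    rw [update_self, update_of_ne hy] at hxy
    exact absurd hxy.symm (hv y hy)
  · subst hy
    rw [update_self, update_of_ne hx] at hxy
    exact absurd hxy (hv x hx)
  · rw [update_of_ne hx, update_of_ne hy] at hxy
    exact hf hxy

section RowReduction

variable {R m o : Type*} [Ring R] [Fintype m] [DecidableEq m]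

theorem Matrix.exists_isUnit_mul_apply_eq_update_mul (A : Matrix m o R) (t : m) {u : R}
    (hu : IsUnit u) :
    ∃ E : Matrix m m R, IsUnit E ∧ ∀ r j, (E * A) r j = update (1 : m → R) t u r * A r j :=
  ⟨diagonal (update 1 t u), (Pi.isUnit_iff.2 fun r => by
      rcases eq_or_ne r t with rfl | h <;> simp [*]).map (diagonalRingHom m R),
    fun r j => diagonal_mul _ _ _ _⟩

theorem Matrix.exists_isUnit_mul_apply_eq_sub (A : Matrix m o R) (t : m) {c : m → R}
    (hc : c t = 0) :
    ∃ E : Matrix m m R, IsUnit E ∧ ∀ r j, (E * A) r j = A r j - c r * A t j := by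
  refine ⟨1 - vecMulVec c (Pi.single t 1), IsNilpotent.isUnit_one_sub ⟨2, ?_⟩,
    fun r j => ?_⟩
  · simp [pow_two, vecMulVec_mul_vecMulVec, hc]
  · simp [Matrix.sub_mul, vecMulVec_mul, vecMulVec_apply]

theorem Matrix.exists_isUnit_pivot (A : Matrix m o R) {t : m} {j : o} (hu : IsUnit (A t j)) :
    ∃ E : Matrix m m R, IsUnit E ∧ (∀ r, (E * A) r j = (Pi.single t 1 : m → R) r) ∧
      (∀ j', A t j' = 0 → ∀ r, (E * A) r j' = A r j') ∧
      (∀ r, r ≠ t → A r j = 0 → ∀ j', (E * A) r j' = A r j') := by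
  obtain ⟨E₁, hE₁, hX⟩ := A.exists_isUnit_mul_apply_eq_update_mul t (hu.unit⁻¹).isUnit
  set X := E₁ * A
  have hXt : X t j = 1 := by simp [hX]
  have hXr : ∀ r, r ≠ t → ∀ j', X r j' = A r j' := fun r hr j' => by simp [hX, hr]
  obtain ⟨E₂, hE₂, hY⟩ := X.exists_isUnit_mul_apply_eq_sub t
    (c := fun r => X r j - (Pi.single t 1 : m → R) r) (by simp [hXt])
  refine ⟨E₂ * E₁, hE₂.mul hE₁, fun r => ?_, fun j' hj' r => ?_,
    fun r hr hr0 j' => ?_⟩ <;> rw [Matrix.mul_assoc, hY]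
  · simp [hXt]
  · have hXt' : X t j' = 0 := by simp [hX, hj']
    rcases eq_or_ne r t with rfl | hr
    · simp [hXt', hj']
    · simp [hXt', hXr r hr]
  · simp [hXr r hr, hr0, hr]

end RowReduction

theorem Fin.ncard_setOf_sub_le {p c : ℕ} (hc : c ≤ p) :
    {r : Fin p | p - c ≤ (r : ℕ)}.ncard = c := by
  have h := Set.ncard_compl {r : Fin p | (r : ℕ) < p - c}
  rw [Set.ncard_eq_toFinset_card' {r : Fin p | (r : ℕ) < p - c}] at h
  simp only [Set.toFinset_ofPred, Fin.card_filter_val_lt, Nat.card_eq_fintype_card,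
    Fintype.card_fin] at h
  simpa [Set.compl_ofPred, not_lt, Nat.sub_sub_self hc] using h

theorem Fin.exists_perm_mem_iff_sub_ncard_le {p : ℕ} (W : Set (Fin p)) :
    ∃ σ : Equiv.Perm (Fin p), ∀ r, σ r ∈ W ↔ p - W.ncard ≤ (r : ℕ) := by
  classical
  have hcard : Nat.card {r : Fin p // p - W.ncard ≤ (r : ℕ)} = Nat.card W := by
    rw [Nat.card_coe_set_eq W]
    exact (Nat.card_coe_set_eq {r : Fin p | p - W.ncard ≤ (r : ℕ)}).trans
      (Fin.ncard_setOf_sub_le (by simpa using Set.ncard_le_card W))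
  let e := Fintype.equivOfCardEq (by simpa only [Nat.card_eq_fintype_card] using hcard)
  refine ⟨Equiv.extendSubtype e, fun r => ⟨fun h => ?_, Equiv.extendSubtype_mem e r⟩⟩
  by_contra hr
  exact Equiv.extendSubtype_not_mem e r hr h

theorem Equiv.Perm.isUnit_permMatrix {n R : Type*} [DecidableEq n] [Fintype n] [Semiring R]
    (σ : Equiv.Perm n) : IsUnit (σ.permMatrix R) := by
  simpa using (Group.isUnit σ⁻¹).map (Matrix.permMatrixHom (n := n) (R := R))

section IsPivotableOn

variable {R m : Type*} [MonoidWithZero R]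

def IsPivotableOn (W : Set m) (v : m → R) : Prop :=
  (∀ r ∈ W, v r = 0 ∨ IsUnit (v r)) ∧ ∃ r ∈ W, IsUnit (v r)

theorem isPivotableOn_congr {W : Set m} {v w : m → R} (h : ∀ r ∈ W, v r = w r) :
    IsPivotableOn W v ↔ IsPivotableOn W w := by
  unfold IsPivotableOn
  constructor <;> rintro ⟨h₁, r, hr, hu⟩ <;>
    refine ⟨fun r' hr' => ?_, r, hr, ?_⟩ <;> simp_all

theorem eq_zero_or_exists_ne_zero_not_isUnit_of_not_isPivotableOn {W : Set m} {v : m → R}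
    (h : ¬ IsPivotableOn W v) :
    (∀ r ∈ W, v r = 0) ∨ ∃ r ∈ W, v r ≠ 0 ∧ ¬ IsUnit (v r) := by
  by_contra! ⟨⟨r, hr, hr0⟩, hunit⟩
  exact h ⟨fun r' hr' => or_iff_not_imp_left.2 (hunit r' hr'), r, hr, hunit r hr hr0⟩

theorem isPivotableOn_preimage_comp {m' : Type*} (σ : m' ≃ m) {W : Set m} {v : m → R} :
    IsPivotableOn (σ ⁻¹' W) (v ∘ σ) ↔ IsPivotableOn W v := by
  constructor
  · rintro ⟨h, r, hr, hu⟩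
    exact ⟨fun r' hr' => by simpa using h (σ.symm r') (by simpa using hr'), σ r, hr, hu⟩
  · rintro ⟨h, r, hr, hu⟩
    exact ⟨fun r' hr' => h (σ r') hr', σ.symm r, by simpa using hr, by simpa using hu⟩

end IsPivotableOn

structure PivotConfig {R m o β : Type*} [Ring R] [Fintype m] [DecidableEq m]
    (M : Matrix m o R) (b : o → β) (ι : Type*) where
  Q : Matrix m m R
  isUnit_Q : IsUnit Q
  col : ι → o
  row : ι → m
  injective_block : Injective (b ∘ col)
  injective_row : Injective row
  mul_apply_col : ∀ l r, (Q * M) r (col l) = (Pi.single (row l) 1 : m → R) r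

namespace PivotConfig

variable {R m o β ι κ : Type*} [Ring R] [Fintype m] [DecidableEq m]
  {M : Matrix m o R} {b : o → β}

def comap (C : PivotConfig M b κ) (f : ι ↪ κ) : PivotConfig M b ι where
  Q := C.Q
  isUnit_Q := C.isUnit_Q
  col := C.col ∘ f
  row := C.row ∘ f
  injective_block := C.injective_block.comp f.injective
  injective_row := C.injective_row.comp f.injective
  mul_apply_col l := C.mul_apply_col (f l)

theorem exists_isUnit_submatrix (C : PivotConfig M b ι) (hrow : Bijective C.row) :
    ∃ f : m → o, Injective (b ∘ f) ∧ IsUnit (M.submatrix id f) := by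
  let e := Equiv.ofBijective C.row hrow
  refine ⟨C.col ∘ e.symm, C.injective_block.comp e.symm.injective, ?_⟩
  have h : C.Q * M.submatrix id (C.col ∘ e.symm) = 1 := by
    ext r s
    have := C.mul_apply_col (e.symm s) r
    rw [show C.row (e.symm s) = s from e.apply_symm_apply s] at this
    simpa [Matrix.mul_apply, Matrix.one_apply, Pi.single_apply] using this
  rw [← C.isUnit_Q.unit_spec] at h
  exact Units.inv_eq_of_mul_eq_one_right h ▸ Units.isUnit _

theorem nonempty_option_of_isUnit (C : PivotConfig M b ι) {t : m} {j : o}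
    (hj : b j ∉ Set.range (b ∘ C.col)) (ht : t ∉ Set.range C.row)
    (hu : IsUnit ((C.Q * M) t j)) :
    Nonempty (PivotConfig M b (Option ι)) := by
  obtain ⟨E, hE, hpiv, hkeep, -⟩ := (C.Q * M).exists_isUnit_pivot hu
  refine ⟨⟨E * C.Q, hE.mul C.isUnit_Q, Option.elim' j C.col, Option.elim' t C.row,
    Option.injective_iff.2 ⟨C.injective_block, hj⟩,
    Option.injective_iff.2 ⟨C.injective_row, ht⟩, ?_⟩⟩
  rintro (_ | l) r <;> rw [Matrix.mul_assoc]
  · exact hpiv r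
  · have h0 : (C.Q * M) t (C.col l) = 0 := by
      rw [C.mul_apply_col, Pi.single_eq_of_ne]
      exact fun h => ht ⟨l, h.symm⟩
    rw [Option.elim'_some, hkeep _ h0 r]
    exact C.mul_apply_col l r

theorem exists_exchange (C : PivotConfig M b ι) [DecidableEq ι] {l₀ : ι} {j : o}
    (hj : ∀ l, l ≠ l₀ → b (C.col l) ≠ b j) (hu : IsUnit ((C.Q * M) (C.row l₀) j)) :
    ∃ C' : PivotConfig M b ι, C'.row = C.row ∧ C'.col = update C.col l₀ j ∧
      ∀ r, r ≠ C.row l₀ → (C.Q * M) r j = 0 →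
        ∀ j', (C'.Q * M) r j' = (C.Q * M) r j' := by
  obtain ⟨E, hE, hpiv, hkeep, hfix⟩ := (C.Q * M).exists_isUnit_pivot hu
  refine ⟨⟨E * C.Q, hE.mul C.isUnit_Q, update C.col l₀ j, C.row, ?_, C.injective_row, ?_⟩,
    rfl, rfl, fun r hr hr0 j' => by rw [Matrix.mul_assoc]; exact hfix r hr hr0 j'⟩
  · rw [comp_update]
    exact C.injective_block.update hj
  · intro l r
    rw [Matrix.mul_assoc]
    rcases eq_or_ne l l₀ with rfl | hl
    · rw [update_self]
      exact hpiv r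
    · have h0 : (C.Q * M) (C.row l₀) (C.col l) = 0 := by
        rw [C.mul_apply_col, Pi.single_eq_of_ne]
        exact C.injective_row.ne hl.symm
      rw [update_of_ne hl, hkeep _ h0 r]
      exact C.mul_apply_col l r

theorem not_mem_range_comp_update_col (C : PivotConfig M b ι) [DecidableEq ι] {l₀ : ι}
    {j d : o}
    (hj : b j ∉ Set.range (b ∘ C.col)) (hd : b d = b (C.col l₀)) :
    b d ∉ Set.range (b ∘ update C.col l₀ j) := by
  rintro ⟨l, hl⟩
  rcases eq_or_ne l l₀ with rfl | hne
  · rw [Function.comp_apply, update_self] at hl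
    exact hj ⟨l, hd.symm.trans hl.symm⟩
  · rw [Function.comp_apply, update_of_ne hne] at hl
    exact hne (C.injective_block (hl.trans hd))

def window (C : PivotConfig M b ι) (s : Set ι) : Set m := (Set.range C.row)ᶜ ∪ C.row '' s

theorem window_mono (C : PivotConfig M b ι) : Monotone C.window :=
  fun _ _ h => Set.union_subset_union_right _ (Set.image_mono h)

def tower (C : PivotConfig M b ι) : ℕ → Set ι
  | 0 => ∅
  | i + 1 => C.tower i ∪
      {l | ∃ j, b j = b (C.col l) ∧ IsPivotableOn (C.window (C.tower i)) ((C.Q * M)ᵀ j)}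

theorem mem_tower_succ {C : PivotConfig M b ι} {i : ℕ} {l : ι} :
    l ∈ C.tower (i + 1) ↔ l ∈ C.tower i ∨
      ∃ j, b j = b (C.col l) ∧ IsPivotableOn (C.window (C.tower i)) ((C.Q * M)ᵀ j) :=
  Iff.rfl

theorem tower_mono (C : PivotConfig M b ι) : Monotone C.tower :=
  monotone_nat_of_le_succ fun _ _ => mem_tower_succ.2 ∘ Or.inl

theorem ncard_window [Finite ι] (C : PivotConfig M b ι) (s : Set ι) :
    (C.window s).ncard = Fintype.card m - Nat.card ι + s.ncard := by
  rw [window,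
    Set.ncard_union_eq (Set.disjoint_compl_left_iff_subset.2 (Set.image_subset_range _ _)),
    Set.ncard_compl, Set.ncard_range_of_injective C.injective_row,
    Set.ncard_image_of_injective _ C.injective_row, Nat.card_eq_fintype_card]

theorem window_eq_of_row_eq {C C' : PivotConfig M b ι} (h : C'.row = C.row) :
    C'.window = C.window := by
  funext s
  simp only [window, h]

theorem exists_of_mem_window_tower_succ (C : PivotConfig M b ι) {s : ℕ} {r : m}
    (hr : r ∈ C.window (C.tower (s + 1))) (hr' : r ∉ C.window (C.tower s)) :
    ∃ l₀, C.row l₀ = r ∧ l₀ ∉ C.tower s ∧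
      ∃ d, b d = b (C.col l₀) ∧ IsPivotableOn (C.window (C.tower s)) ((C.Q * M)ᵀ d) := by
  rcases hr with hfree | ⟨l₀, hl₀, rfl⟩
  · exact absurd (Or.inl hfree) hr'
  have hl₀' : l₀ ∉ C.tower s := fun h => hr' (Or.inr ⟨l₀, h, rfl⟩)
  exact ⟨l₀, rfl, hl₀', (mem_tower_succ.1 hl₀).resolve_left hl₀'⟩

theorem tower_eq_of_eqOn_window (C C' : PivotConfig M b ι) {s : ℕ} {l₀ : ι}
    (hrow : C'.row = C.row) (hcol : ∀ l, l ≠ l₀ → C'.col l = C.col l)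
    (hQM : ∀ r ∈ C.window (C.tower s), ∀ j, (C'.Q * M) r j = (C.Q * M) r j)
    (hl₀ : l₀ ∉ C.tower s)
    (hnew : ∀ i < s, ∀ j, b j = b (C'.col l₀) →
      ¬ IsPivotableOn (C.window (C.tower i)) ((C.Q * M)ᵀ j)) :
    ∀ i ≤ s, C'.tower i = C.tower i
  | 0, _ => rfl
  | i + 1, hi => by
    have ih := tower_eq_of_eqOn_window C C' hrow hcol hQM hl₀ hnew i (by omega)
    have hpiv : ∀ j, IsPivotableOn (C'.window (C'.tower i)) ((C'.Q * M)ᵀ j) ↔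
        IsPivotableOn (C.window (C.tower i)) ((C.Q * M)ᵀ j) := fun j => by
      rw [ih, window_eq_of_row_eq hrow]
      exact isPivotableOn_congr fun r hr => hQM r (C.window_mono (C.tower_mono (by omega)) hr) j
    ext l
    rw [mem_tower_succ, mem_tower_succ, ih]
    rcases eq_or_ne l l₀ with rfl | hl
    · have hC : ¬ ∃ j, b j = b (C.col l) ∧
          IsPivotableOn (C.window (C.tower i)) ((C.Q * M)ᵀ j) :=
        fun h => hl₀ (C.tower_mono hi (mem_tower_succ.2 (Or.inr h)))
      have hC' : ¬ ∃ j, b j = b (C'.col l) ∧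
          IsPivotableOn (C'.window (C.tower i)) ((C'.Q * M)ᵀ j) :=
        fun ⟨j, hj, h⟩ => hnew i (by omega) j hj ((hpiv j).1 (ih ▸ h))
      simp only [hC, hC', or_false]
    · simp only [hcol l hl, ← ih, hpiv]

theorem not_isPivotableOn_window_tower (hmax : IsEmpty (PivotConfig M b (Option ι))) (i : ℕ) :
    ∀ (C : PivotConfig M b ι) (j : o), b j ∉ Set.range (b ∘ C.col) →
      ¬ IsPivotableOn (C.window (C.tower i)) ((C.Q * M)ᵀ j) := by
  classical
  induction i using Nat.strong_induction_on with
  | _ i ih =>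
  intro C j hj hpiv
  have hex : ∃ i', ∃ r ∈ C.window (C.tower i'), IsUnit ((C.Q * M) r j) := ⟨i, hpiv.2⟩
  obtain ⟨r, hr, hu⟩ := Nat.find_spec hex
  have hle : Nat.find hex ≤ i := Nat.find_min' hex hpiv.2
  cases hfind : Nat.find hex with
  | zero =>
    rw [hfind] at hr
    have hfree : r ∉ Set.range C.row := by simpa [window, tower] using hr
    exact hmax.false (C.nonempty_option_of_isUnit hj hfree hu).some
  | succ s =>
    rw [hfind] at hr hle
    have hs : ¬ ∃ r ∈ C.window (C.tower s), IsUnit ((C.Q * M) r j) :=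
      Nat.find_min hex (by omega)
    have hzero : ∀ r ∈ C.window (C.tower s), (C.Q * M) r j = 0 := fun r hr' =>
      (hpiv.1 r (C.window_mono (C.tower_mono (by omega)) hr')).resolve_right
        fun hu' => hs ⟨r, hr', hu'⟩
    obtain ⟨l₀, rfl, hl₀, d, hd, hdpiv⟩ :=
      C.exists_of_mem_window_tower_succ hr fun hr' => hs ⟨_, hr', hu⟩
    -- Exchange `l₀` for `j`: as `j` vanishes on the window of stage `s`, the stages up to `s`
    -- are unchanged, and the displaced pivotable column `d` now lies in a block without pivot.
    obtain ⟨C', hrow, hcol, hQM⟩ := C.exists_exchange (fun l _ h => hj ⟨l, h⟩) hu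
    have hagree : ∀ r ∈ C.window (C.tower s), ∀ j', (C'.Q * M) r j' = (C.Q * M) r j' :=
      fun r hr' => hQM r (by rintro rfl; exact hs ⟨_, hr', hu⟩) (hzero r hr')
    have htower : C'.tower s = C.tower s :=
      tower_eq_of_eqOn_window C C' hrow (fun l hl => by rw [hcol, update_of_ne hl]) hagree hl₀
        (fun i' hi' j' hj' => ih i' (by omega) C j' (by rwa [hj', hcol, update_self])) s le_rfl
    refine ih s (by omega) C' d (hcol ▸ C.not_mem_range_comp_update_col hj hd) ?_
    rw [htower, window_eq_of_row_eq hrow]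
    exact (isPivotableOn_congr fun r hr => hagree r hr d).2 hdpiv

theorem exists_not_isPivotableOn_window [Finite ι] (hmax : IsEmpty (PivotConfig M b (Option ι)))
    (C : PivotConfig M b ι) :
    ∃ T : Set ι, ∀ j, b j ∉ (b ∘ C.col) '' T →
      ¬ IsPivotableOn (C.window T) ((C.Q * M)ᵀ j) := by
  obtain ⟨N, hN⟩ := WellFoundedGT.monotone_chain_condition ⟨C.tower, C.tower_mono⟩
  refine ⟨C.tower N, fun j hj hpiv => ?_⟩
  by_cases hfree : b j ∈ Set.range (b ∘ C.col)
  · obtain ⟨l, hl⟩ := hfree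
    have hl' : l ∈ C.tower (N + 1) := mem_tower_succ.2 (Or.inr ⟨j, hl.symm, hpiv⟩)
    have hfix : C.tower N = C.tower (N + 1) := hN (N + 1) (by omega)
    exact hj ⟨l, hfix ▸ hl', hl⟩
  · exact not_isPivotableOn_window_tower hmax N C j hfree hpiv

variable (M b) in
theorem exists_maximal :
    ∃ k, Nonempty (PivotConfig M b (Fin k)) ∧ IsEmpty (PivotConfig M b (Option (Fin k))) := by
  classical
  let P k := Nonempty (PivotConfig M b (Fin k))
  have hle : ∀ k, P k → k ≤ Fintype.card m := fun k ⟨C⟩ => by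
    simpa using Fintype.card_le_of_injective _ C.injective_row
  have h0 : P 0 := ⟨⟨1, isUnit_one, Fin.elim0, Fin.elim0, injective_of_subsingleton _,
    injective_of_subsingleton _, fun l => l.elim0⟩⟩
  refine ⟨Nat.findGreatest P (Fintype.card m), Nat.findGreatest_spec (Nat.zero_le _) h0,
    ⟨fun C => ?_⟩⟩
  have hC : P (Nat.findGreatest P (Fintype.card m) + 1) :=
    ⟨C.comap (finSuccEquiv _).toEmbedding⟩
  exact Nat.findGreatest_is_greatest (Nat.lt_succ_self _) (hle _ hC) hC

end PivotConfig

end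

/-- Main Theorem: over any ring with identity, if no transversal p×p submatrix of the
block-partitioned M is invertible, then there are an invertible Q and 0 < m ≤ p such
that in all but at most m-1 blocks of QM, every column's last m entries are either all
zero or contain a non-zero non-unit. -/
theorem stmt_17 {R : Type*} [Ring R] {p q n : ℕ}
    (M : Matrix (Fin p) (Fin q) R) (b : Fin q → Fin n)
    (h : ∀ f : Fin p → Fin q, Function.Injective (b ∘ f) →
      ¬ IsUnit (M.submatrix id f)) :
    ∃ (Q : Matrix (Fin p) (Fin p) R) (m : ℕ), IsUnit Q ∧ 0 < m ∧ m ≤ p ∧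
      ∃ S : Finset (Fin n), S.card ≤ m - 1 ∧
        ∀ i : Fin n, i ∉ S → ∀ j : Fin q, b j = i →
          ((∀ r : Fin p, p - m ≤ (r : ℕ) → (Q * M) r j = 0) ∨
           (∃ r : Fin p, p - m ≤ (r : ℕ) ∧ (Q * M) r j ≠ 0 ∧
             ¬ IsUnit ((Q * M) r j))) := by
  classical
  obtain ⟨k, ⟨C⟩, hmax⟩ := PivotConfig.exists_maximal M b
  have hk : k < p := by
    refine lt_of_le_of_ne (by simpa using Fintype.card_le_of_injective _ C.injective_row)
      fun hkp => ?_
    subst hkp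
    obtain ⟨f, hf, hu⟩ :=
      C.exists_isUnit_submatrix (Finite.injective_iff_bijective.1 C.injective_row)
    exact h f hf hu
  obtain ⟨T, hT⟩ := C.exists_not_isPivotableOn_window hmax
  have hW : (C.window T).ncard = p - k + T.ncard := by simpa using C.ncard_window T
  have hTk : T.ncard ≤ k := by simpa using Set.ncard_le_card T
  obtain ⟨σ, hσ⟩ := Fin.exists_perm_mem_iff_sub_ncard_le (C.window T)
  refine ⟨σ.permMatrix R * C.Q, (C.window T).ncard, σ.isUnit_permMatrix.mul C.isUnit_Q,
    by omega, by omega, ((b ∘ C.col) '' T).toFinset, ?_, ?_⟩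
  · rw [← Set.ncard_eq_toFinset_card']
    have := Set.ncard_image_le (f := b ∘ C.col) (s := T)
    omega
  · rintro _ hi j rfl
    have hj := hT j (by simpa using hi)
    rw [← isPivotableOn_preimage_comp σ, show σ ⁻¹' C.window T = _ from Set.ext hσ] at hj
    have hrow : ∀ r, (σ.permMatrix R * C.Q * M) r j = (C.Q * M) (σ r) j := fun r => by
      rw [Matrix.mul_assoc, PEquiv.toMatrix_toPEquiv_mul]
      rfl
    simp only [hrow]
    exact eq_zero_or_exists_ne_zero_not_isUnit_of_not_isPivotableOn hj
end
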